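/- arXiv:1602.00164 — 5 statements merged into one kernel-verified Lean document; each statement's English description precedes it below -/
import Mathlib

section
/- For every z₁, z₂ ∈ ℂ and every point x of Rep(Q̄,α), the complex moment map satisfies μ_ℂ(z·x) = z₁² μ_ℂ(x) − z₂² μ_ℂ(x)† − 2√−1 z₁z₂ μ_ℝ(x), where z = z₁ + z₂𝐣 acts by the quaternionic action and † denotes componentwise conjugate transpose (equality of tuples in ∏_{v∈Q₀} M_{α_v}(ℂ)). -/
/-! Both moment maps are sums over arrows, so the identity reduces to a single arrow with
`X = x_a`, `Y = x_{a*}`, where expanding gives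
`(z₁X − z₂Y†)(z₁Y + z₂X†) = z₁² XY − z₂² (XY)† + z₁z₂ (XX† − Y†Y)`
(the tail term is the same expansion for `Y, X, −z₂`); the factor `−2√−1 · √−1/2 = 1` turns the
`z₁z₂`-terms into `μ_ℝ`. -/

open Matrix Finset

namespace QuiverMomentMaps

/-- Cast a matrix along equalities of its dimensions. -/
def castM {m n m' n' : ℕ} (hm : m = m') (hn : n = n')
    (M : Matrix (Fin m) (Fin n) ℂ) : Matrix (Fin m') (Fin n') ℂ :=
  Matrix.of fun i j => M (Fin.cast hm.symm i) (Fin.cast hn.symm j)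

variable {V A : Type} [Fintype V] [Fintype A] [DecidableEq V]

/-- A point of `Rep(Q̄,α)`: for each arrow `a` of the quiver `Q = (V, A, t, h)` a matrix
`x_a` of size `α(h a) × α(t a)` together with a matrix `x_{a*}` of size `α(t a) × α(h a)`. -/
abbrev RepX (t h : A → V) (α : V → ℕ) : Type :=
  (∀ a : A, Matrix (Fin (α (h a))) (Fin (α (t a))) ℂ) ×
    (∀ a : A, Matrix (Fin (α (t a))) (Fin (α (h a))) ℂ)

/-- The complex moment map `μ_ℂ`; its `v`-component is
`Σ_{a : h(a)=v} x_a x_{a*} − Σ_{a : t(a)=v} x_{a*} x_a`. -/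
noncomputable def muC (t h : A → V) (α : V → ℕ) (x : RepX t h α) (v : V) :
    Matrix (Fin (α v)) (Fin (α v)) ℂ :=
  (∑ a : A, if ha : h a = v then
      castM (congrArg α ha) (congrArg α ha) (x.1 a * x.2 a) else 0)
    - ∑ a : A, if ha : t a = v then
      castM (congrArg α ha) (congrArg α ha) (x.2 a * x.1 a) else 0

/-- The real moment map `μ_ℝ`; its `v`-component is
`(√−1/2)(Σ_{a : h(a)=v}(x_a x_a† − x_{a*}† x_{a*}) + Σ_{a : t(a)=v}(x_{a*} x_{a*}† − x_a† x_a))`. -/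
noncomputable def muR (t h : A → V) (α : V → ℕ) (x : RepX t h α) (v : V) :
    Matrix (Fin (α v)) (Fin (α v)) ℂ :=
  (Complex.I / 2) •
    ((∑ a : A, if ha : h a = v then
        castM (congrArg α ha) (congrArg α ha) (x.1 a * (x.1 a)ᴴ - (x.2 a)ᴴ * x.2 a) else 0)
      + ∑ a : A, if ha : t a = v then
        castM (congrArg α ha) (congrArg α ha) (x.2 a * (x.2 a)ᴴ - (x.1 a)ᴴ * x.1 a) else 0)

/-- The quaternionic action of `z = z₁ + z₂𝐣` on `Rep(Q̄,α)`:
`(z·x)_a = z₁x_a − z₂x_{a*}†` and `(z·x)_{a*} = z₁x_{a*} + z₂x_a†`. -/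
noncomputable def qact (t h : A → V) (α : V → ℕ) (z₁ z₂ : ℂ) (x : RepX t h α) : RepX t h α :=
  (fun a => z₁ • x.1 a - z₂ • (x.2 a)ᴴ, fun a => z₁ • x.2 a + z₂ • (x.1 a)ᴴ)

theorem castM_eq_submatrix {m n m' n' : ℕ} (hm : m = m') (hn : n = n')
    (M : Matrix (Fin m) (Fin n) ℂ) :
    castM hm hn M = M.submatrix (Fin.cast hm.symm) (Fin.cast hn.symm) :=
  rfl

section ArrowIdentities

variable {m n : Type*}

theorem quaternion_mul_head [Fintype n] (z₁ z₂ : ℂ) (X : Matrix m n ℂ) (Y : Matrix n m ℂ) :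
    (z₁ • X - z₂ • Yᴴ) * (z₁ • Y + z₂ • Xᴴ) =
      z₁ ^ 2 • (X * Y) - z₂ ^ 2 • (X * Y)ᴴ + (z₁ * z₂) • (X * Xᴴ - Yᴴ * Y) := by
  simp only [Matrix.mul_add, Matrix.sub_mul, Matrix.smul_mul, Matrix.mul_smul,
    conjTranspose_mul]
  module

theorem quaternion_mul_tail [Fintype m] (z₁ z₂ : ℂ) (X : Matrix m n ℂ) (Y : Matrix n m ℂ) :
    (z₁ • Y + z₂ • Xᴴ) * (z₁ • X - z₂ • Yᴴ) =
      z₁ ^ 2 • (Y * X) - z₂ ^ 2 • (Y * X)ᴴ - (z₁ * z₂) • (Y * Yᴴ - Xᴴ * X) := by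
  simp only [Matrix.add_mul, Matrix.mul_sub, Matrix.smul_mul, Matrix.mul_smul,
    conjTranspose_mul]
  module

end ArrowIdentities

section ArrowSum

omit [Fintype V]

noncomputable def arrowSum (e : A → V) (α : V → ℕ)
    (M : ∀ a : A, Matrix (Fin (α (e a))) (Fin (α (e a))) ℂ) (v : V) :
    Matrix (Fin (α v)) (Fin (α v)) ℂ :=
  ∑ a : A, if ha : e a = v then castM (congrArg α ha) (congrArg α ha) (M a) else 0

variable (e : A → V) (α : V → ℕ) (v : V)
  (M N : ∀ a : A, Matrix (Fin (α (e a))) (Fin (α (e a))) ℂ)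

theorem arrowSum_add :
    arrowSum e α (fun a => M a + N a) v = arrowSum e α M v + arrowSum e α N v := by
  simp only [arrowSum, ← Finset.sum_add_distrib]
  refine Finset.sum_congr rfl fun a _ => ?_
  split_ifs <;> simp [castM_eq_submatrix, submatrix_add]

theorem arrowSum_sub :
    arrowSum e α (fun a => M a - N a) v = arrowSum e α M v - arrowSum e α N v := by
  simp only [arrowSum, ← Finset.sum_sub_distrib]
  refine Finset.sum_congr rfl fun a _ => ?_
  split_ifs <;> simp [castM_eq_submatrix, submatrix_sub]

theorem arrowSum_smul (c : ℂ) : arrowSum e α (fun a => c • M a) v = c • arrowSum e α M v := by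
  simp only [arrowSum, Finset.smul_sum]
  refine Finset.sum_congr rfl fun a _ => ?_
  split_ifs <;> simp [castM_eq_submatrix, submatrix_smul]

theorem conjTranspose_arrowSum :
    (arrowSum e α M v)ᴴ = arrowSum e α (fun a => (M a)ᴴ) v := by
  simp only [arrowSum, conjTranspose_sum]
  refine Finset.sum_congr rfl fun a _ => ?_
  split_ifs <;> simp [castM_eq_submatrix]

theorem muC_eq_arrowSum (t h : A → V) (α : V → ℕ) (x : RepX t h α) (v : V) :
    muC t h α x v =
      arrowSum h α (fun a => x.1 a * x.2 a) v - arrowSum t α (fun a => x.2 a * x.1 a) v :=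
  rfl

theorem muR_eq_arrowSum (t h : A → V) (α : V → ℕ) (x : RepX t h α) (v : V) :
    muR t h α x v = (Complex.I / 2) •
      (arrowSum h α (fun a => x.1 a * (x.1 a)ᴴ - (x.2 a)ᴴ * x.2 a) v +
        arrowSum t α (fun a => x.2 a * (x.2 a)ᴴ - (x.1 a)ᴴ * x.1 a) v) :=
  rfl

end ArrowSum

/-- **Equation (3.2) of Bellamy–Schedler.**  For every `z₁, z₂ ∈ ℂ` and every point `x` of
`Rep(Q̄,α)`, the complex moment map satisfies
`μ_ℂ(z·x) = z₁² μ_ℂ(x) − z₂² μ_ℂ(x)† − 2√−1 z₁z₂ μ_ℝ(x)`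
(componentwise over the vertices, `†` being componentwise conjugate transpose). -/
theorem stmt_0 (t h : A → V) (α : V → ℕ) (z₁ z₂ : ℂ) (x : RepX t h α) (v : V) :
    muC t h α (qact t h α z₁ z₂ x) v =
      z₁ ^ 2 • muC t h α x v - z₂ ^ 2 • (muC t h α x v)ᴴ
        - (2 * Complex.I * z₁ * z₂) • muR t h α x v := by
  have hcoeff : (2 * Complex.I * z₁ * z₂) * (Complex.I / 2) = -(z₁ * z₂) := by
    linear_combination (z₁ * z₂) * Complex.I_mul_I
  rw [muC_eq_arrowSum, muC_eq_arrowSum, muR_eq_arrowSum, smul_smul, hcoeff]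
  simp only [qact, quaternion_mul_head, quaternion_mul_tail, arrowSum_add, arrowSum_sub,
    arrowSum_smul, ← conjTranspose_arrowSum, conjTranspose_sub]
  module

end QuiverMomentMaps
end

section
/- Let λ, θ ∈ ℝ^{Q₀}, identified with the tuples (λ_v Id)_{v∈Q₀} and (θ_v Id)_{v∈Q₀} of scalar matrices. Let h = (𝐢 − 𝐣)/√2, i.e. the quaternionic action with z₁ = √−1/√2 and z₂ = −1/√2. Then the map x ↦ h·x is a bijection from the set {x ∈ Rep(Q̄,α) : μ_ℂ(x) = λ and μ_ℝ(x) = √−1·θ} onto the set {x ∈ Rep(Q̄,α) : μ_ℂ(x) = −λ − √−1·θ and μ_ℝ(x) = 0}. -/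
open Matrix Finset

namespace QuiverMomentMaps

variable {V A : Type} [Fintype V] [Fintype A] [DecidableEq V]

/-! Under a quaternion `z = z₁ + z₂𝐣`, each arrow contributes to `μ_ℂ(z·x)` and `μ_ℝ(z·x)` a
quadratic expression in `z₁, z₂` whose coefficients are its contributions to `μ_ℂ(x)`, `μ_ℂ(x)ᴴ`
and `μ_ℝ(x)`. For `z = 𝐢r − 𝐣r` with `r² = 1/2` this gives
`μ_ℂ(z·x) = −½(μ_ℂ(x) + μ_ℂ(x)ᴴ) − μ_ℝ(x)` and `μ_ℝ(z·x) = ½(μ_ℂ(x)ᴴ − μ_ℂ(x))`.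
Since `λ` and `θ` are real, these formulas send the first level set into the second for
`r = 1/√2`, and the second into the first for `r = −1/√2`, which is the inverse quaternion. -/

set_option linter.unusedSectionVars false

noncomputable def vertexSum (p : A → V) (α : V → ℕ)
    (F : ∀ a, Matrix (Fin (α (p a))) (Fin (α (p a))) ℂ) (v : V) :
    Matrix (Fin (α v)) (Fin (α v)) ℂ :=
  ∑ a : A, if ha : p a = v then castM (congrArg α ha) (congrArg α ha) (F a) else 0

section vertexSum

variable (p : A → V) (α : V → ℕ) (F G : ∀ a, Matrix (Fin (α (p a))) (Fin (α (p a))) ℂ) (v : V)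

lemma vertexSum_add :
    vertexSum p α (fun a => F a + G a) v = vertexSum p α F v + vertexSum p α G v := by
  rw [vertexSum, vertexSum, vertexSum, ← Finset.sum_add_distrib]
  refine Finset.sum_congr rfl fun a _ => ?_
  split_ifs with ha
  · subst ha; rfl
  · simp

lemma vertexSum_sub :
    vertexSum p α (fun a => F a - G a) v = vertexSum p α F v - vertexSum p α G v := by
  rw [vertexSum, vertexSum, vertexSum, ← Finset.sum_sub_distrib]
  refine Finset.sum_congr rfl fun a _ => ?_
  split_ifs with ha
  · subst ha; rfl
  · simp

lemma vertexSum_smul (c : ℂ) :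
    vertexSum p α (fun a => c • F a) v = c • vertexSum p α F v := by
  rw [vertexSum, vertexSum, Finset.smul_sum]
  refine Finset.sum_congr rfl fun a _ => ?_
  split_ifs with ha
  · subst ha; rfl
  · simp

lemma vertexSum_conjTranspose :
    vertexSum p α (fun a => (F a)ᴴ) v = (vertexSum p α F v)ᴴ := by
  rw [vertexSum, vertexSum, conjTranspose_sum]
  refine Finset.sum_congr rfl fun a _ => ?_
  split_ifs with ha
  · subst ha; rfl
  · simp

end vertexSum

lemma muC_eq_vertexSum (t h : A → V) (α : V → ℕ) (x : RepX t h α) (v : V) :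
    muC t h α x v =
      vertexSum h α (fun a => x.1 a * x.2 a) v - vertexSum t α (fun a => x.2 a * x.1 a) v :=
  rfl

lemma muR_eq_vertexSum (t h : A → V) (α : V → ℕ) (x : RepX t h α) (v : V) :
    muR t h α x v = (Complex.I / 2) •
      (vertexSum h α (fun a => x.1 a * (x.1 a)ᴴ - (x.2 a)ᴴ * x.2 a) v
        + vertexSum t α (fun a => x.2 a * (x.2 a)ᴴ - (x.1 a)ᴴ * x.1 a) v) :=
  rfl

section quaternion

variable {R : Type*} [CommRing R] [StarRing R] {m n : Type*} [Fintype m] [Fintype n]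
  (z₁ z₂ : R) (X : Matrix m n R) (Y : Matrix n m R)

lemma quat_fst_mul_snd :
    (z₁ • X - z₂ • Yᴴ) * (z₁ • Y + z₂ • Xᴴ)
      = z₁ ^ 2 • (X * Y) - z₂ ^ 2 • (X * Y)ᴴ + (z₁ * z₂) • (X * Xᴴ - Yᴴ * Y) := by
  simp only [Matrix.sub_mul, Matrix.mul_add, Matrix.smul_mul, Matrix.mul_smul, conjTranspose_mul]
  module

lemma quat_snd_mul_fst :
    (z₁ • Y + z₂ • Xᴴ) * (z₁ • X - z₂ • Yᴴ)
      = z₁ ^ 2 • (Y * X) - z₂ ^ 2 • (Y * X)ᴴ - (z₁ * z₂) • (Y * Yᴴ - Xᴴ * X) := by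
  simp only [Matrix.add_mul, Matrix.mul_sub, Matrix.smul_mul, Matrix.mul_smul, conjTranspose_mul]
  module

lemma quat_fst_mul_conjTranspose_sub :
    (z₁ • X - z₂ • Yᴴ) * (z₁ • X - z₂ • Yᴴ)ᴴ - (z₁ • Y + z₂ • Xᴴ)ᴴ * (z₁ • Y + z₂ • Xᴴ)
      = (z₁ * star z₁ - z₂ * star z₂) • (X * Xᴴ - Yᴴ * Y)
        - (2 * (z₁ * star z₂)) • (X * Y) - (2 * (star z₁ * z₂)) • (X * Y)ᴴ := by
  simp only [conjTranspose_sub, conjTranspose_add, conjTranspose_smul, conjTranspose_conjTranspose,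
    conjTranspose_mul, Matrix.sub_mul, Matrix.add_mul, Matrix.mul_add, Matrix.mul_sub,
    Matrix.smul_mul, Matrix.mul_smul]
  module

lemma quat_snd_mul_conjTranspose_sub :
    (z₁ • Y + z₂ • Xᴴ) * (z₁ • Y + z₂ • Xᴴ)ᴴ - (z₁ • X - z₂ • Yᴴ)ᴴ * (z₁ • X - z₂ • Yᴴ)
      = (z₁ * star z₁ - z₂ * star z₂) • (Y * Yᴴ - Xᴴ * X)
        + (2 * (z₁ * star z₂)) • (Y * X) + (2 * (star z₁ * z₂)) • (Y * X)ᴴ := by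
  simp only [conjTranspose_sub, conjTranspose_add, conjTranspose_smul, conjTranspose_conjTranspose,
    conjTranspose_mul, Matrix.sub_mul, Matrix.add_mul, Matrix.mul_add, Matrix.mul_sub,
    Matrix.smul_mul, Matrix.mul_smul]
  module

end quaternion

section action

variable (t h : A → V) (α : V → ℕ)

lemma muC_qact (z₁ z₂ : ℂ) (x : RepX t h α) (v : V) :
    muC t h α (qact t h α z₁ z₂ x) v
      = z₁ ^ 2 • muC t h α x v - z₂ ^ 2 • (muC t h α x v)ᴴ
        - (2 * Complex.I * (z₁ * z₂)) • muR t h α x v := by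
  simp only [muC_eq_vertexSum, muR_eq_vertexSum, qact, quat_fst_mul_snd, quat_snd_mul_fst,
    vertexSum_add, vertexSum_sub, vertexSum_smul, vertexSum_conjTranspose]
  simp only [conjTranspose_sub]
  match_scalars <;> ring_nf <;> rw [Complex.I_sq] <;> ring

lemma muR_qact (z₁ z₂ : ℂ) (x : RepX t h α) (v : V) :
    muR t h α (qact t h α z₁ z₂ x) v
      = (z₁ * star z₁ - z₂ * star z₂) • muR t h α x v
        - (Complex.I * (z₁ * star z₂)) • muC t h α x v
        - (Complex.I * (star z₁ * z₂)) • (muC t h α x v)ᴴ := by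
  simp only [muC_eq_vertexSum, muR_eq_vertexSum, qact, quat_fst_mul_conjTranspose_sub,
    quat_snd_mul_conjTranspose_sub, vertexSum_add, vertexSum_sub, vertexSum_smul,
    vertexSum_conjTranspose]
  simp only [conjTranspose_sub]
  match_scalars <;> ring

lemma qact_qact (w₁ w₂ z₁ z₂ : ℂ) (x : RepX t h α) :
    qact t h α w₁ w₂ (qact t h α z₁ z₂ x)
      = qact t h α (w₁ * z₁ - w₂ * star z₂) (w₁ * z₂ + w₂ * star z₁) x := by
  refine Prod.ext (funext fun a => ?_) (funext fun a => ?_) <;>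
    simp only [qact, conjTranspose_add, conjTranspose_sub, conjTranspose_smul,
      conjTranspose_conjTranspose] <;>
    module

lemma qact_one_zero (x : RepX t h α) : qact t h α 1 0 x = x := by
  simp [qact]

lemma qact_invOn {z₁ z₂ : ℂ} (hz : star z₁ * z₁ + star z₂ * z₂ = 1) :
    Set.InvOn (qact t h α (star z₁) (-z₂)) (qact t h α z₁ z₂) Set.univ Set.univ := by
  constructor <;> intro x _ <;> rw [qact_qact] <;> convert qact_one_zero t h α x using 2
  · linear_combination hz
  · ring
  · rw [star_neg]; linear_combination hz
  · rw [star_star]; ring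

lemma muC_qact_twist {r : ℝ} (hr : r ^ 2 = 1 / 2) (x : RepX t h α) (v : V) :
    muC t h α (qact t h α (Complex.I * r) (-r) x) v
      = -(1 / 2 : ℂ) • (muC t h α x v + (muC t h α x v)ᴴ) - muR t h α x v := by
  have hr' : (r : ℂ) ^ 2 = 1 / 2 := by rw [← Complex.ofReal_pow, hr]; norm_num
  rw [muC_qact]
  match_scalars <;> ring_nf <;> simp only [Complex.I_sq, hr'] <;> ring

lemma muR_qact_twist {r : ℝ} (hr : r ^ 2 = 1 / 2) (x : RepX t h α) (v : V) :
    muR t h α (qact t h α (Complex.I * r) (-r) x) v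
      = (1 / 2 : ℂ) • ((muC t h α x v)ᴴ - muC t h α x v) := by
  have hr' : (r : ℂ) ^ 2 = 1 / 2 := by rw [← Complex.ofReal_pow, hr]; norm_num
  rw [muR_qact]
  simp only [star_mul', star_neg, Complex.star_def, Complex.conj_I, Complex.conj_ofReal]
  match_scalars <;> ring_nf <;> simp only [Complex.I_sq, hr'] <;> ring

end action

/-- **Hyperkähler twist (proof of Proposition 3.6 of Bellamy–Schedler).**
Let `λ, θ ∈ ℝ^{Q₀}`, identified with tuples of scalar matrices.  Multiplication by the
quaternion `h = (𝐢 − 𝐣)/√2`, i.e. the quaternionic action with `z₁ = √−1/√2` and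
`z₂ = −1/√2`, is a bijection from
`{x : μ_ℂ(x) = λ, μ_ℝ(x) = √−1·θ}` onto `{x : μ_ℂ(x) = −λ − √−1·θ, μ_ℝ(x) = 0}`. -/
theorem stmt_2 (t h : A → V) (α : V → ℕ) (lam th : V → ℝ) :
    Set.BijOn
      (qact t h α (Complex.I / (Real.sqrt 2 : ℂ)) (-(1 / (Real.sqrt 2 : ℂ))))
      {x : RepX t h α | (∀ v, muC t h α x v = (lam v : ℂ) • 1) ∧
        ∀ v, muR t h α x v = (Complex.I * (th v : ℂ)) • 1}
      {x : RepX t h α | (∀ v, muC t h α x v = (-(lam v : ℂ) - Complex.I * (th v : ℂ)) • 1) ∧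
        ∀ v, muR t h α x v = 0} := by
  set r : ℝ := (Real.sqrt 2)⁻¹
  have hr : r ^ 2 = 1 / 2 := by rw [inv_pow, Real.sq_sqrt zero_le_two, one_div]
  have hr' : (r : ℂ) ^ 2 = 1 / 2 := by rw [← Complex.ofReal_pow, hr]; norm_num
  rw [show Complex.I / (Real.sqrt 2 : ℂ) = Complex.I * r by push_cast [r]; ring,
    show -(1 / (Real.sqrt 2 : ℂ)) = -r by push_cast [r]; ring]
  have hinv : Set.InvOn (qact t h α (Complex.I * (-r : ℝ)) (-(-r : ℝ)))
      (qact t h α (Complex.I * r) (-r)) Set.univ Set.univ := by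
    convert qact_invOn t h α (z₁ := Complex.I * r) (z₂ := -r) ?_ using 3
    · simp only [Complex.ofReal_neg, mul_neg, star_mul', Complex.star_def, Complex.conj_I,
        Complex.conj_ofReal, neg_mul]
    · push_cast; ring
    · simp only [star_mul', star_neg, Complex.star_def, Complex.conj_I, Complex.conj_ofReal]
      linear_combination (-(r : ℂ) ^ 2) * Complex.I_sq + 2 * hr'
  have hr_neg : (-r) ^ 2 = 1 / 2 := by rw [neg_sq, hr]
  refine (hinv.mono (Set.subset_univ _) (Set.subset_univ _)).bijOn ?_ ?_
  · rintro x ⟨hC, hR⟩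
    refine ⟨fun v => ?_, fun v => ?_⟩ <;>
      simp only [muC_qact_twist t h α hr, muR_qact_twist t h α hr, hC, hR, conjTranspose_smul,
        conjTranspose_one, Complex.star_def, Complex.conj_ofReal] <;>
      module
  · rintro x ⟨hC, hR⟩
    refine ⟨fun v => ?_, fun v => ?_⟩ <;>
      simp only [muC_qact_twist t h α hr_neg, muR_qact_twist t h α hr_neg, hC, hR,
        conjTranspose_smul, conjTranspose_one, star_sub, star_neg, star_mul', Complex.star_def,
        Complex.conj_ofReal, Complex.conj_I] <;>
      module

end QuiverMomentMaps
end

section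
/- Let d, n ≥ 2 be integers with (n,d) ≠ (2,2). Let k ≥ 1 and let ℓ_1,…,ℓ_k and ν_1,…,ν_k be positive integers with Σ_{i=1}^k ℓ_i ν_i = n, and assume it is not the case that k = 1 and ℓ_1 = 1. Then 2(n²(d−1)+1) − 2(k + (d−1)Σ_{i=1}^k ν_i²) ≥ 4. -/
/-!
Write `S = ∑ νᵢ²`, `M = ∑ νᵢ ≤ n` and `k` for the number of parts; the claim is
`k + 1 ≤ (d - 1)(n² - S)`. Since `(νᵢ - 1)(M - νᵢ) ≥ 0`, summing gives `S + (k - 1)M ≤ M²`.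
If some `ℓᵢ ≥ 2` then `n ≥ M + 1`, so `n² - S ≥ 2M + 1 + (k - 1)M ≥ k + 1` already.
Otherwise `n = M`, nontriviality forces `k ≥ 2`, and `(d - 1)(k - 1)n ≥ k + 1` holds as soon as
`n ≥ 3` or `d ≥ 3`, i.e. away from `(n, d) = (2, 2)`.
-/

open Finset

variable {ι : Type*} (s : Finset ι)

lemma card_le_sum_of_one_le {ν : ι → ℕ} (hν : ∀ i ∈ s, 1 ≤ ν i) : #s ≤ ∑ i ∈ s, ν i := by
  simpa using s.card_nsmul_le_sum ν 1 hν

lemma sum_sq_add_card_mul_sum_le {ν : ι → ℕ} (hν : ∀ i ∈ s, 1 ≤ ν i) :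
    ∑ i ∈ s, ν i ^ 2 + #s * ∑ i ∈ s, ν i ≤ (∑ i ∈ s, ν i) ^ 2 + ∑ i ∈ s, ν i := by
  set M := ∑ i ∈ s, ν i
  have termwise : ∀ i ∈ s, ν i ^ 2 + M ≤ ν i * M + ν i := fun i hi => by
    have hνM : ν i ≤ M := single_le_sum (fun j _ => Nat.zero_le (ν j)) hi
    nlinarith [hν i hi]
  simpa only [sum_add_distrib, sum_const, smul_eq_mul, ← sum_mul, sq] using sum_le_sum termwise

lemma sum_lt_sum_mul_of_exists_ne_one {ℓ ν : ι → ℕ} (hℓ : ∀ i ∈ s, 1 ≤ ℓ i)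
    (hν : ∀ i ∈ s, 1 ≤ ν i) (h : ∃ i ∈ s, ℓ i ≠ 1) :
    ∑ i ∈ s, ν i < ∑ i ∈ s, ℓ i * ν i := by
  obtain ⟨i, hi, hℓi⟩ := h
  refine sum_lt_sum (fun j hj => Nat.le_mul_of_pos_left _ (hℓ j hj)) ⟨i, hi, ?_⟩
  have : 2 ≤ ℓ i := by have := hℓ i hi; omega
  nlinarith [hν i hi]

lemma sum_sq_add_card_add_one_le_sq {ℓ ν : ι → ℕ} (hℓ : ∀ i ∈ s, 1 ≤ ℓ i)
    (hν : ∀ i ∈ s, 1 ≤ ν i) (h : ∃ i ∈ s, ℓ i ≠ 1) :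
    ∑ i ∈ s, ν i ^ 2 + #s + 1 ≤ (∑ i ∈ s, ℓ i * ν i) ^ 2 := by
  have hM := sum_lt_sum_mul_of_exists_ne_one s hℓ hν h
  have hS := sum_sq_add_card_mul_sum_le s hν
  have hk := card_le_sum_of_one_le s hν
  set M := ∑ i ∈ s, ν i
  set n := ∑ i ∈ s, ℓ i * ν i
  nlinarith

lemma add_one_le_mul_of_ne_two_two {d n k : ℕ} (hd : 2 ≤ d) (hn : 2 ≤ n) (hk : 2 ≤ k)
    (hnd : (n, d) ≠ (2, 2)) : (k : ℤ) + 1 ≤ ((d : ℤ) - 1) * ((k : ℤ) - 1) * n := by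
  have : 3 ≤ n ∨ 3 ≤ d := by
    by_contra! h
    exact hnd (by ext <;> simp <;> omega)
  zify at hd hn hk
  rcases this with h | h <;> zify at h
  · nlinarith [mul_nonneg (mul_nonneg (sub_nonneg.2 hd) (sub_nonneg.2 hk)) (sub_nonneg.2 hn),
      mul_nonneg (sub_nonneg.2 hk) (sub_nonneg.2 h)]
  · nlinarith [mul_nonneg (mul_nonneg (sub_nonneg.2 h) (sub_nonneg.2 hk)) (sub_nonneg.2 hn),
      mul_nonneg (sub_nonneg.2 hk) (sub_nonneg.2 hn)]

/-- **Lemma 6.1(3) of Bellamy–Schedler (arithemtic content).**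
For the quiver variety `Char(n,d)`, the open stratum has dimension `2(n²(d−1)+1)` and the
stratum of representation type given by the weighted partition `(ℓ_1,ν_1;…;ℓ_k,ν_k)` of `n`
has dimension `2(k + (d−1)Σνᵢ²)`.  If `d, n ≥ 2`, `(n,d) ≠ (2,2)` and the weighted partition
is not the trivial one `(1, n)` (i.e. it is not the case that `k = 1` and `ℓ_1 = 1`), then
every stratum other than the open one has codimension at least `4`. -/
theorem stmt_4 (d n : ℕ) (hd : 2 ≤ d) (hn : 2 ≤ n) (hnd : (n, d) ≠ (2, 2))
    (k : ℕ) (hk : 1 ≤ k) (ℓ ν : Fin k → ℕ)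
    (hℓ : ∀ i, 1 ≤ ℓ i) (hν : ∀ i, 1 ≤ ν i)
    (hsum : ∑ i, ℓ i * ν i = n)
    (hnontriv : ¬ (k = 1 ∧ ∀ i, ℓ i = 1)) :
    (4 : ℤ) ≤ 2 * ((n : ℤ) ^ 2 * ((d : ℤ) - 1) + 1)
      - 2 * ((k : ℤ) + ((d : ℤ) - 1) * ∑ i, (ν i : ℤ) ^ 2) := by
  suffices h : (k : ℤ) + 1 ≤ ((d : ℤ) - 1) * ((n : ℤ) ^ 2 - ∑ i, (ν i : ℤ) ^ 2) by linarith
  have hd' : (2 : ℤ) ≤ d := by exact_mod_cast hd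
  by_cases hall : ∀ i, ℓ i = 1
  · have hk2 : 2 ≤ k := by
      by_contra h
      exact hnontriv ⟨by omega, hall⟩
    have hnM : ∑ i, ν i = n := by simpa [hall] using hsum
    have hS := sum_sq_add_card_mul_sum_le univ fun i _ => hν i
    rw [hnM, card_univ, Fintype.card_fin] at hS
    have hS' : ∑ i, (ν i : ℤ) ^ 2 + k * n ≤ n ^ 2 + n := by exact_mod_cast hS
    nlinarith [add_one_le_mul_of_ne_two_two hd hn hk2 hnd]
  · obtain ⟨i, hi⟩ := not_forall.mp hall
    have hS := sum_sq_add_card_add_one_le_sq univ (fun i _ => hℓ i) (fun i _ => hν i)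
      ⟨i, mem_univ i, hi⟩
    rw [hsum, card_univ, Fintype.card_fin] at hS
    have hS' : ∑ i, (ν i : ℤ) ^ 2 + k + 1 ≤ n ^ 2 := by exact_mod_cast hS
    nlinarith
end

section
/- Let g, n ≥ 1. The assignment (A_l, A*_l)_{l=1}^g ↦ (A_l, A_l^{-1} + A*_l)_{l=1}^g defines a bijection from the set {(A_l, A*_l) ∈ (M_n(ℂ) × M_n(ℂ))^g : each A_l, each 1 + A_lA*_l and each 1 + A*_lA_l is invertible, and Π_{l=1}^g (1 + A_lA*_l)(1 + A*_lA_l)^{-1} = 1} onto the set {(A_l, B_l) ∈ (GL_n(ℂ) × GL_n(ℂ))^g : Π_{l=1}^g A_lB_lA_l^{-1}B_l^{-1} = 1}, and this bijection is equivariant for the simultaneous conjugation action of GL_n(ℂ) on both sets. (The target set is in natural bijection with Hom(π_g, GL_n(ℂ)) for the genus-g surface group π_g.) -/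
/-!
For an invertible `A` put `B = A⁻¹ + A*`. Then `AB = 1 + AA*` and `BA = 1 + A*A`, so
`B` is invertible exactly when `1 + AA*` is, exactly when `1 + A*A` is, and the commutator
`ABA⁻¹B⁻¹ = (AB)(BA)⁻¹` is the `l`-th factor `(1 + AA*)(1 + A*A)⁻¹` of the moment map.
Hence the two defining relations coincide factor by factor, and `B ↦ B - A⁻¹` inverts the map.
Equivariance holds because matrix inversion commutes with conjugation by `GL_n`.
-/

noncomputable section
namespace MultiplicativePreprojective

abbrev Mat (n : ℕ) : Type := Matrix (Fin n) (Fin n) ℂ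

/-- The fiber `Ψ⁻¹(1)` of the multiplicative moment map for the quiver with one vertex
and `g` loops: the tuples `(A_l, A*_l)` of `n×n` matrices such that each `A_l`,
`1 + A_lA*_l` and `1 + A*_lA_l` is invertible, and
`Π_{l=1}^g (1 + A_lA*_l)(1 + A*_lA_l)⁻¹ = 1` (ordered product). -/
def Src (n g : ℕ) : Set (Fin g → Mat n × Mat n) :=
  {p | (∀ l, IsUnit (p l).1 ∧ IsUnit (1 + (p l).1 * (p l).2) ∧
        IsUnit (1 + (p l).2 * (p l).1)) ∧
    (List.ofFn fun l : Fin g =>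
      (1 + (p l).1 * (p l).2) * (1 + (p l).2 * (p l).1)⁻¹).prod = 1}

/-- The set of tuples `(A_l, B_l)` of invertible matrices with
`Π_{l=1}^g A_lB_lA_l⁻¹B_l⁻¹ = 1`, which is in natural bijection with
`Hom(π_g, GL_n(ℂ))` for the genus-`g` surface group `π_g`. -/
def Tgt (n g : ℕ) : Set (Fin g → Mat n × Mat n) :=
  {q | (∀ l, IsUnit (q l).1 ∧ IsUnit (q l).2) ∧
    (List.ofFn fun l : Fin g =>
      (q l).1 * (q l).2 * ((q l).1)⁻¹ * ((q l).2)⁻¹).prod = 1}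

/-- The map `(A_l, A*_l) ↦ (A_l, A_l⁻¹ + A*_l)`. -/
def Phi (n g : ℕ) (p : Fin g → Mat n × Mat n) : Fin g → Mat n × Mat n :=
  fun l => ((p l).1, ((p l).1)⁻¹ + (p l).2)

/-- Simultaneous conjugation by `u ∈ GL_n(ℂ)`. -/
def conjAct (n g : ℕ) (u : GL (Fin n) ℂ) (p : Fin g → Mat n × Mat n) :
    Fin g → Mat n × Mat n :=
  fun l => ((u : Mat n) * (p l).1 * ((u⁻¹ : GL (Fin n) ℂ) : Mat n),
    (u : Mat n) * (p l).2 * ((u⁻¹ : GL (Fin n) ℂ) : Mat n))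

end MultiplicativePreprojective

namespace Matrix

variable {m K : Type*} [Fintype m] [DecidableEq m] [CommRing K] {A : Matrix m m K}

theorem mul_mul_inv_mul_inv_eq (A B : Matrix m m K) : A * B * A⁻¹ * B⁻¹ = A * B * (B * A)⁻¹ := by
  rw [mul_inv_rev, ← mul_assoc]

theorem mul_inv_add (hA : IsUnit A) (S : Matrix m m K) : A * (A⁻¹ + S) = 1 + A * S := by
  rw [mul_add, mul_nonsing_inv A (A.isUnit_iff_isUnit_det.mp hA)]

theorem inv_add_mul (hA : IsUnit A) (S : Matrix m m K) : (A⁻¹ + S) * A = 1 + S * A := by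
  rw [add_mul, nonsing_inv_mul A (A.isUnit_iff_isUnit_det.mp hA)]

theorem isUnit_one_add_mul_iff (hA : IsUnit A) (S : Matrix m m K) :
    IsUnit (1 + A * S) ↔ IsUnit (A⁻¹ + S) := by
  rw [← mul_inv_add hA, hA.mul_left_iff]

theorem isUnit_one_add_mul_iff' (hA : IsUnit A) (S : Matrix m m K) :
    IsUnit (1 + S * A) ↔ IsUnit (A⁻¹ + S) := by
  rw [← inv_add_mul hA, hA.mul_right_iff]

theorem mul_inv_add_mul_inv_mul_inv (hA : IsUnit A) (S : Matrix m m K) :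
    A * (A⁻¹ + S) * A⁻¹ * (A⁻¹ + S)⁻¹ = (1 + A * S) * (1 + S * A)⁻¹ := by
  rw [mul_mul_inv_mul_inv_eq, mul_inv_add hA, inv_add_mul hA]

theorem inv_units_mul_mul_inv (u : GL m K) (A : Matrix m m K) :
    ((u : Matrix m m K) * A * ((u⁻¹ : GL m K) : Matrix m m K))⁻¹ =
      (u : Matrix m m K) * A⁻¹ * ((u⁻¹ : GL m K) : Matrix m m K) := by
  rw [mul_inv_rev, mul_inv_rev, coe_units_inv, nonsing_inv_nonsing_inv _ (isUnits_det_units u),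
    mul_assoc]

end Matrix

namespace MultiplicativePreprojective

open Matrix

theorem mem_Src_iff {n g : ℕ} {p : Fin g → Mat n × Mat n} :
    p ∈ Src n g ↔ (∀ l, IsUnit (p l).1) ∧ Phi n g p ∈ Tgt n g := by
  simp only [Src, Tgt, Phi, Set.mem_ofPred_eq]
  by_cases hA : ∀ l, IsUnit (p l).1
  · have hprod :
        (fun l => (p l).1 * ((p l).1⁻¹ + (p l).2) * (p l).1⁻¹ * ((p l).1⁻¹ + (p l).2)⁻¹) =
          fun l => (1 + (p l).1 * (p l).2) * (1 + (p l).2 * (p l).1)⁻¹ :=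
      funext fun l => mul_inv_add_mul_inv_mul_inv (hA l) _
    simp only [hA, hprod, true_and, isUnit_one_add_mul_iff (hA _),
      isUnit_one_add_mul_iff' (hA _), and_self, implies_true]
  · simp only [hA, false_and, iff_false, not_and]
    exact fun h => absurd (fun l => (h l).1) hA

theorem Phi_injective (n g : ℕ) : Function.Injective (Phi n g) := by
  intro p p' h
  funext l
  have h₁ : (p l).1 = (p' l).1 := congrArg (fun q => (q l).1) h
  have h₂ : ((p l).1)⁻¹ + (p l).2 = ((p' l).1)⁻¹ + (p' l).2 := congrArg (fun q => (q l).2) h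
  rw [h₁, add_right_inj] at h₂
  exact Prod.ext h₁ h₂

theorem Phi_sub_inv (n g : ℕ) (q : Fin g → Mat n × Mat n) :
    Phi n g (fun l => ((q l).1, (q l).2 - ((q l).1)⁻¹)) = q := by
  funext l
  simp only [Phi, add_sub_cancel]

theorem Phi_conjAct (n g : ℕ) (u : GL (Fin n) ℂ) (p : Fin g → Mat n × Mat n) :
    Phi n g (conjAct n g u p) = conjAct n g u (Phi n g p) := by
  funext l
  simp only [Phi, conjAct, inv_units_mul_mul_inv, mul_add, add_mul]

theorem stmt_15_general (n g : ℕ) :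
    Set.BijOn (Phi n g) (Src n g) (Tgt n g) ∧
      ∀ (u : GL (Fin n) ℂ) (p : Fin g → Mat n × Mat n), p ∈ Src n g →
        Phi n g (conjAct n g u p) = conjAct n g u (Phi n g p) := by
  refine ⟨⟨fun p hp => (mem_Src_iff.mp hp).2, (Phi_injective n g).injOn, ?_⟩,
    fun u p _ => Phi_conjAct n g u p⟩
  intro q hq
  refine ⟨fun l => ((q l).1, (q l).2 - ((q l).1)⁻¹), mem_Src_iff.mpr ⟨fun l => (hq.1 l).1, ?_⟩,
    Phi_sub_inv n g q⟩
  rwa [Phi_sub_inv]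

/-- **Proposition 2 of Crawley-Boevey–Shaw, as used in §8 of Bellamy–Schedler.**  The
assignment `(A_l, A*_l) ↦ (A_l, A_l⁻¹ + A*_l)` is a bijection from the fiber `Ψ⁻¹(1)` of
the multiplicative moment map onto the set of tuples of invertible matrices satisfying
the surface-group relation `Π_l A_lB_lA_l⁻¹B_l⁻¹ = 1` (i.e. onto `Hom(π_g, GL_n(ℂ))`),
equivariantly for simultaneous conjugation by `GL_n(ℂ)`. -/
theorem stmt_15 (n g : ℕ) (hn : 1 ≤ n) (hg : 1 ≤ g) :
    Set.BijOn (Phi n g) (Src n g) (Tgt n g) ∧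
      ∀ (u : GL (Fin n) ℂ) (p : Fin g → Mat n × Mat n), p ∈ Src n g →
        Phi n g (conjAct n g u p) = conjAct n g u (Phi n g p) :=
  stmt_15_general n g

end MultiplicativePreprojective
end
end

section
/- Let V = ℂ⁴ with a fixed nondegenerate alternating bilinear form ω, and let sp(V,ω) = {B ∈ End(V) : ω(Bu, w) + ω(u, Bw) = 0 for all u, w ∈ V}. Define φ : V → End(V) by φ(v)(u) = ω(u, v) v. Then: (1) for every v ∈ V, φ(v) ∈ sp(V,ω), φ(v)² = 0, and rank φ(v) ≤ 1; (2) φ(v) = φ(w) if and only if w = v or w = −v; and (3) φ is surjective onto {B ∈ sp(V,ω) : B² = 0 and rank B ≤ 1}. Consequently φ induces a bijection V/{±1} ≅ {B ∈ sp(V,ω) : B² = 0, rank B ≤ 1}. -/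
/-!
Write `φ(v) = v ⊗ ω(·, v)`. Alternation of `ω` makes `φ(v)` skew-adjoint and `φ(v)² = ω(v, v) φ(v) = 0`,
and its image lies in the line `ℂ v`. Conversely, if `B` is skew-adjoint with image in a line `ℂ x`,
write `B u = f(u) x`; pairing the skew-adjointness relation with a vector `w₀` such that
`ω(x, w₀) ≠ 0` shows `f` is a multiple `c · ω(·, x)`, so `B = c φ(x) = φ(√c x)` because
`φ(s v) = s² φ(v)`. The same scaling identity gives injectivity up to sign: `φ(v) = φ(w)` forces
`w = s v` by nondegeneracy, and then `s² = 1`.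
-/

noncomputable section
namespace MinimalNilpotentSp4

open LinearMap

/-- `sp(V,ω)`: endomorphisms `B` with `ω(Bu,w) + ω(u,Bw) = 0` for all `u, w`. -/
def sp (ω : LinearMap.BilinForm ℂ (Fin 4 → ℂ)) : Set (Module.End ℂ (Fin 4 → ℂ)) :=
  {B | ∀ u w : Fin 4 → ℂ, ω (B u) w + ω u (B w) = 0}

/-- The map `φ : V → End(V)`, `φ(v)(u) = ω(u,v) v`. -/
def φ (ω : LinearMap.BilinForm ℂ (Fin 4 → ℂ)) (v : Fin 4 → ℂ) :
    Module.End ℂ (Fin 4 → ℂ) :=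
  (LinearMap.toSpanSingleton ℂ (Fin 4 → ℂ) v).comp (ω.flip v)

open Module Submodule

section MomentMap

variable {K V : Type*} [Field K] [AddCommGroup V] [Module K V] {ω : LinearMap.BilinForm K V}

variable (ω) in
def momentMap (v : V) : Module.End K V :=
  (toSpanSingleton K V v).comp (ω.flip v)

@[simp]
lemma momentMap_apply (v u : V) : momentMap ω v u = ω u v • v := rfl

lemma momentMap_smul (c : K) (v : V) : momentMap ω (c • v) = (c * c) • momentMap ω v := by
  ext u
  simp only [momentMap_apply, map_smul, LinearMap.smul_apply, smul_eq_mul, smul_smul]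
  ring_nf

lemma momentMap_neg (v : V) : momentMap ω (-v) = momentMap ω v := by
  simpa using momentMap_smul (ω := ω) (-1) v

lemma range_momentMap_le (v : V) : range (momentMap ω v) ≤ K ∙ v :=
  (range_comp_le_range _ _).trans_eq (range_toSpanSingleton v)

lemma finrank_range_momentMap_le_one (v : V) : finrank K (range (momentMap ω v)) ≤ 1 :=
  (finrank_mono (range_momentMap_le v)).trans ((finrank_span_le_card {v}).trans_eq (by simp))

lemma isSkewAdjoint_momentMap (hω : ω.IsAlt) (v : V) : IsSkewAdjoint ω (momentMap ω v) := by
  intro u w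
  simp only [Pi.neg_apply, momentMap_apply, map_neg, map_smul, LinearMap.smul_apply, smul_eq_mul,
    ← hω.neg_eq v w]
  ring

lemma momentMap_mul_self (hω : ω.IsAlt) (v : V) : momentMap ω v * momentMap ω v = 0 := by
  ext u
  simp [hω.self_eq_zero]

lemma momentMap_eq_zero_iff (hω : ω.SeparatingRight) {v : V} : momentMap ω v = 0 ↔ v = 0 := by
  refine ⟨fun h ↦ by_contra fun hv ↦ hv (hω v fun u ↦ ?_), fun h ↦ by ext; simp [h]⟩
  simpa [hv] using DFunLike.congr_fun h u

lemma momentMap_eq_momentMap_iff (hω : ω.SeparatingRight) {v w : V} :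
    momentMap ω v = momentMap ω w ↔ w = v ∨ w = -v := by
  refine ⟨fun h ↦ ?_, by rintro (rfl | rfl) <;> simp [momentMap_neg]⟩
  rcases eq_or_ne v 0 with rfl | hv
  · left
    rw [← momentMap_eq_zero_iff hω, ← h]
    ext
    simp
  obtain ⟨u, hu⟩ : ∃ u, ω u v ≠ 0 := by
    by_contra! h'
    exact hv (hω v h')
  have huw : ω u v • v = ω u w • w := DFunLike.congr_fun h u
  have hw : ω u w ≠ 0 := fun h0 ↦ by simp_all
  set c := ω u v / ω u w
  have hwv : w = c • v := by
    rw [show c = (ω u w)⁻¹ * ω u v from div_eq_inv_mul .., mul_smul, huw, inv_smul_smul₀ hw]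
  have hc : (c * c) • momentMap ω v = (1 : K) • momentMap ω v := by
    rw [one_smul, ← momentMap_smul, ← hwv, h]
  have := smul_left_injective K (mt (momentMap_eq_zero_iff hω).1 hv) hc
  rcases mul_self_eq_one_iff.1 this with h1 | h1 <;> simp [hwv, h1]

lemma eq_smul_momentMap_of_range_le (hω : ω.SeparatingLeft) {B : Module.End K V}
    (hB : IsSkewAdjoint ω B) {x : V} (hx : range B ≤ K ∙ x) : ∃ c : K, B = c • momentMap ω x := by
  rcases eq_or_ne x 0 with rfl | hx0
  · exact ⟨0, by simpa [range_eq_bot] using hx⟩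
  obtain ⟨w₀, hw₀⟩ : ∃ w, ω x w ≠ 0 := by
    by_contra! h
    exact hx0 (hω x h)
  choose f hf using fun u ↦ mem_span_singleton.1 (hx (mem_range_self B u))
  have hfu : ∀ u, f u * ω x w₀ = -(f w₀ * ω u x) := fun u ↦ by
    simpa [← hf] using hB u w₀
  refine ⟨-(f w₀ / ω x w₀), LinearMap.ext fun u ↦ ?_⟩
  rw [← hf, LinearMap.smul_apply, momentMap_apply, smul_smul]
  congr 1
  field_simp
  linear_combination hfu u

lemma exists_momentMap_eq [IsAlgClosed K] [FiniteDimensional K V] (hω : ω.SeparatingLeft)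
    {B : Module.End K V} (hB : IsSkewAdjoint ω B) (hrank : finrank K (range B) ≤ 1) :
    ∃ v, momentMap ω v = B := by
  obtain ⟨x, hx⟩ := (finrank_le_one_iff_isPrincipal _).1 hrank
  obtain ⟨c, rfl⟩ := eq_smul_momentMap_of_range_le hω hB hx.le
  obtain ⟨s, rfl⟩ := IsAlgClosed.exists_eq_mul_self c
  exact ⟨s • x, momentMap_smul s x⟩

end MomentMap

lemma mem_sp_iff {ω : LinearMap.BilinForm ℂ (Fin 4 → ℂ)} {B : Module.End ℂ (Fin 4 → ℂ)} :
    B ∈ sp ω ↔ IsSkewAdjoint ω B :=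
  forall₂_congr fun u w ↦ by simp [add_eq_zero_iff_eq_neg]

/-- **The identification `𝒩̄²₁ ≅ ℂ⁴/ℤ₂` from §5.1 of Bellamy–Schedler.**
Let `V = ℂ⁴` with a nondegenerate alternating bilinear form `ω`, and let
`φ(v)(u) = ω(u,v)v`.  Then: (1) each `φ(v)` lies in `sp(V,ω)`, squares to zero and has
rank at most one; (2) `φ(v) = φ(w)` iff `w = ±v`; (3) every `B ∈ sp(V,ω)` with `B² = 0`
and `rank B ≤ 1` is of the form `φ(v)`.  Consequently `φ` induces a bijection
`ℂ⁴/{±1} ≅ {B ∈ sp(V,ω) : B² = 0, rank B ≤ 1}`. -/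
theorem stmt_17 (ω : LinearMap.BilinForm ℂ (Fin 4 → ℂ))
    (halt : ∀ v, ω v v = 0) (hnd : ω.Nondegenerate) :
    (∀ v : Fin 4 → ℂ, φ ω v ∈ sp ω ∧ φ ω v * φ ω v = 0 ∧
        Module.finrank ℂ (LinearMap.range (φ ω v)) ≤ 1) ∧
      (∀ v w : Fin 4 → ℂ, φ ω v = φ ω w ↔ (w = v ∨ w = -v)) ∧
      (∀ B ∈ sp ω, B * B = 0 → Module.finrank ℂ (LinearMap.range B) ≤ 1 →
        ∃ v : Fin 4 → ℂ, φ ω v = B) := by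
  have hφ : φ ω = momentMap ω := rfl
  refine ⟨fun v ↦ ?_, fun v w ↦ ?_, fun B hB _ hrank ↦ ?_⟩
  · rw [hφ, mem_sp_iff]
    exact ⟨isSkewAdjoint_momentMap halt v, momentMap_mul_self halt v,
      finrank_range_momentMap_le_one v⟩
  · rw [hφ, momentMap_eq_momentMap_iff hnd.2]
  · rw [hφ]
    exact exists_momentMap_eq hnd.1 (mem_sp_iff.1 hB) hrank

end MinimalNilpotentSp4
end
end
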